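/- arXiv:1201.4503 — 7 statements merged into one kernel-verified Lean document; each statement's English description precedes it below -/
import Mathlib

section
/- For every n ≥ 1, the n-th cyclotomic polynomial evaluated at 2 satisfies Φ_n(2) ≥ 2^{φ(n) - 2}, where φ is Euler's totient function. -/
/-!
Möbius inversion of `∏_{d ∣ n} Φ_d(2) = 2^n - 1` gives
`Φ_n(2) = ∏_{d ∣ n} (2^d - 1)^{μ(n/d)} = 2^{φ(n)} ∏_{d ∣ n} (1 - 2^{-d})^{μ(n/d)}`,
because `∑_{d ∣ n} μ(n/d) d = φ(n)`. Each base `1 - 2^{-d}` lies in `(0, 1)` and `μ ≤ 1`, so the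
last product is at least `∏_{d ∣ n} (1 - 2^{-d}) ≥ ∏_{d ≥ 1} (1 - 2^{-d}) ≥ 1/4`.
-/

open Polynomial ArithmeticFunction
open scoped ArithmeticFunction.Moebius

theorem Finset.prod_zpow_eq_zpow_sum₀ {ι G : Type*} [CommGroupWithZero G] (s : Finset ι)
    (f : ι → ℤ) {a : G} (ha : a ≠ 0) : ∏ i ∈ s, a ^ f i = a ^ ∑ i ∈ s, f i := by
  induction s using Finset.cons_induction with
  | empty => simp
  | cons i s hi ih => rw [prod_cons, sum_cons, ih, zpow_add₀ ha]

theorem Nat.totient_eq_sum_moebius_mul {n : ℕ} (hn : 0 < n) :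
    (n.totient : ℤ) = ∑ x ∈ n.divisorsAntidiagonal, μ x.1 * x.2 := by
  have := (sum_eq_iff_sum_smul_moebius_eq (f := fun d => (d.totient : ℤ))
    (g := fun d => (d : ℤ))).1 (fun d _ => by exact_mod_cast Nat.sum_totient d) n hn
  simpa only [smul_eq_mul] using this.symm

-- The extra term `2⁻¹ ^ (m + 1)` is what makes the induction go through.
theorem inv_four_add_inv_two_pow_le_prod_Icc (m : ℕ) :
    4⁻¹ + 2⁻¹ ^ (m + 1) ≤ ∏ b ∈ Finset.Icc 1 m, (1 - (2⁻¹ : ℝ) ^ b) := by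
  induction m with
  | zero => norm_num
  | succ m ih =>
    rw [Finset.prod_Icc_succ_top (by omega), pow_succ]
    rcases Nat.eq_zero_or_pos m with rfl | hm
    · norm_num
    have hy : (2⁻¹ : ℝ) ^ (m + 1) ≤ 2⁻¹ ^ 2 :=
      pow_le_pow_of_le_one (by norm_num) (by norm_num) (by omega)
    have hy0 : (0 : ℝ) < 2⁻¹ ^ (m + 1) := by positivity
    nlinarith [mul_le_mul_of_nonneg_right ih (by linarith : (0 : ℝ) ≤ 1 - 2⁻¹ ^ (m + 1))]

theorem inv_four_le_prod_one_sub_inv_two_pow (S : Finset ℕ) (hS : ∀ b ∈ S, 0 < b) :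
    4⁻¹ ≤ ∏ b ∈ S, (1 - (2⁻¹ : ℝ) ^ b) := by
  have hsub : S ⊆ Finset.Icc 1 (S.sup id) := fun b hb =>
    Finset.mem_Icc.2 ⟨hS b hb, Finset.le_sup (f := id) hb⟩
  calc (4⁻¹ : ℝ) ≤ 4⁻¹ + 2⁻¹ ^ (S.sup id + 1) := by simp
    _ ≤ ∏ b ∈ Finset.Icc 1 (S.sup id), (1 - (2⁻¹ : ℝ) ^ b) :=
      inv_four_add_inv_two_pow_le_prod_Icc _
    _ ≤ ∏ b ∈ S, (1 - (2⁻¹ : ℝ) ^ b) :=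
      Finset.prod_anti_set_of_le_one (fun b => by simp [inv_le_one_of_one_le₀, one_le_pow₀])
        (fun b => by simp) hsub

theorem prod_one_sub_pow_le_prod_zpow_moebius {x : ℝ} (hx0 : 0 ≤ x) (hx1 : x < 1) (n : ℕ) :
    ∏ d ∈ n.divisors, (1 - x ^ d) ≤ ∏ y ∈ n.divisorsAntidiagonal, (1 - x ^ y.2) ^ μ y.1 := by
  rw [Nat.prod_divisorsAntidiagonal' fun i d => (1 - x ^ d) ^ μ i]
  refine Finset.prod_le_prod (fun d _ => sub_nonneg.2 (pow_le_one₀ hx0 hx1.le)) fun d hd => ?_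
  have hpos : 0 < 1 - x ^ d := sub_pos.2 (pow_lt_one₀ hx0 hx1 (Nat.pos_of_mem_divisors hd).ne')
  calc 1 - x ^ d = (1 - x ^ d) ^ (1 : ℤ) := (zpow_one _).symm
    _ ≤ (1 - x ^ d) ^ μ (n / d) := zpow_le_zpow_right_of_le_one₀ hpos
        (sub_le_self _ (pow_nonneg hx0 d)) (abs_le.1 abs_moebius_le_one).2

namespace Polynomial

theorem cyclotomic_eval_eq_prod_pow_moebius {n : ℕ} (hn : 0 < n) {q : ℝ} (hq : 1 < q) :
    (cyclotomic n ℝ).eval q = ∏ x ∈ n.divisorsAntidiagonal, (q ^ x.2 - 1) ^ μ x.1 := by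
  refine ((prod_eq_iff_prod_pow_moebius_eq_of_nonzero (fun d _ => (cyclotomic_pos' d hq).ne')
    (fun d hd => sub_ne_zero.2 (one_lt_pow₀ hq hd.ne').ne')).1 (fun d hd => ?_) n hn).symm
  simpa [eval_prod] using congrArg (eval q) (prod_cyclotomic_eq_X_pow_sub_one hd ℝ)

theorem cyclotomic_eval_eq_zpow_totient_mul {n : ℕ} (hn : 0 < n) {q : ℝ} (hq : 1 < q) :
    (cyclotomic n ℝ).eval q =
      q ^ (n.totient : ℤ) * ∏ x ∈ n.divisorsAntidiagonal, (1 - q⁻¹ ^ x.2) ^ μ x.1 := by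
  have hq0 : q ≠ 0 := by positivity
  have hfactor : ∀ d : ℕ, q ^ d - 1 = q ^ d * (1 - q⁻¹ ^ d) := fun d => by
    rw [mul_sub, mul_one, ← mul_pow, mul_inv_cancel₀ hq0, one_pow]
  simp_rw [cyclotomic_eval_eq_prod_pow_moebius hn hq, hfactor, mul_zpow, Finset.prod_mul_distrib,
    ← zpow_natCast, ← zpow_mul, Finset.prod_zpow_eq_zpow_sum₀ _ _ hq0,
    Nat.totient_eq_sum_moebius_mul hn, mul_comm]

end Polynomial

theorem stmt_2 (n : ℕ) (hn : 1 ≤ n) :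
    (((Polynomial.cyclotomic n ℤ).eval 2 : ℤ) : ℝ) ≥ (2 : ℝ) ^ ((n.totient : ℤ) - 2) := by
  have hcast : (((cyclotomic n ℤ).eval 2 : ℤ) : ℝ) = (cyclotomic n ℝ).eval 2 := by
    simpa using (cyclotomic.eval_apply (2 : ℤ) n (Int.castRingHom ℝ)).symm
  rw [ge_iff_le, hcast, cyclotomic_eval_eq_zpow_totient_mul hn one_lt_two,
    zpow_sub₀ two_ne_zero, div_eq_mul_inv]
  gcongr
  calc ((2 : ℝ) ^ (2 : ℤ))⁻¹ = 4⁻¹ := by norm_num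
    _ ≤ ∏ d ∈ n.divisors, (1 - (2⁻¹ : ℝ) ^ d) :=
      inv_four_le_prod_one_sub_inv_two_pow _ fun _ => Nat.pos_of_mem_divisors
    _ ≤ _ := prod_one_sub_pow_le_prod_zpow_moebius (by norm_num) (by norm_num) n
end

section
/- For every n ≥ 1, |∑_{d ∣ n} μ(n/d) · log(1 - 2^{-d})| ≤ 2 · log 2, where μ is the Möbius function and the sum is over positive divisors d of n. -/
/-!
Since `|μ| ≤ 1`, each summand is bounded by `-log (1 - 2⁻ᵈ)`. Concavity of `log` puts the graph of
`x ↦ -log (1 - x)` on `[0, 1/2]` below its chord `x ↦ 2 log 2 · x`, so the sum is at most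
`2 log 2 · ∑_{d ∣ n} 2⁻ᵈ ≤ 2 log 2 · ∑_{d ≥ 1} 2⁻ᵈ = 2 log 2`.
-/

open Finset Real

lemma neg_log_one_sub_le_two_mul_log_two_mul {x : ℝ} (hx₀ : 0 ≤ x) (hx : x ≤ 1 / 2) :
    -log (1 - x) ≤ 2 * log 2 * x := by
  -- `1 - x` is the convex combination `(1 - 2x) • 1 + 2x • (1/2)`.
  have h := strictConcaveOn_log_Ioi.concaveOn.2 (Set.mem_Ioi.2 one_pos)
    (Set.mem_Ioi.2 one_half_pos)
    (by linarith : 0 ≤ 1 - 2 * x) (by linarith : 0 ≤ 2 * x) (by ring)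
  rw [show (1 - 2 * x) • (1 : ℝ) + (2 * x) • (1 / 2 : ℝ) = 1 - x by simp only [smul_eq_mul]; ring]
    at h
  simp only [smul_eq_mul, log_one, one_div, log_inv] at h
  linarith

lemma sum_divisors_inv_two_pow_le_one (n : ℕ) : ∑ d ∈ n.divisors, (2⁻¹ : ℝ) ^ d ≤ 1 :=
  calc ∑ d ∈ n.divisors, (2⁻¹ : ℝ) ^ d
      ≤ ∑ d ∈ Ico 1 (n + 1), (2⁻¹ : ℝ) ^ d :=
        sum_le_sum_of_subset_of_nonneg (filter_subset _ _) fun _ _ _ ↦ by positivity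
    _ ≤ (2⁻¹ : ℝ) ^ 1 / (1 - 2⁻¹) := geom_sum_Ico_le_of_lt_one (by norm_num) (by norm_num)
    _ = 1 := by norm_num

lemma abs_moebius_mul_log_one_sub_two_zpow_le (k : ℕ) {d : ℕ} (hd : 1 ≤ d) :
    |(ArithmeticFunction.moebius k : ℝ) * log (1 - (2 : ℝ) ^ (-(d : ℤ)))|
      ≤ 2 * log 2 * (2⁻¹ : ℝ) ^ d := by
  have hμ : |(ArithmeticFunction.moebius k : ℝ)| ≤ 1 := by
    exact_mod_cast ArithmeticFunction.abs_moebius_le_one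
  have hx₀ : (0 : ℝ) < 2⁻¹ ^ d := by positivity
  have hx : (2⁻¹ : ℝ) ^ d ≤ 1 / 2 := by
    simpa using pow_le_pow_of_le_one (by norm_num : (0 : ℝ) ≤ 2⁻¹) (by norm_num) hd
  rw [zpow_neg, zpow_natCast, ← inv_pow, abs_mul]
  calc |(ArithmeticFunction.moebius k : ℝ)| * |log (1 - 2⁻¹ ^ d)|
      ≤ |log (1 - 2⁻¹ ^ d)| := mul_le_of_le_one_left (abs_nonneg _) hμ
    _ = -log (1 - 2⁻¹ ^ d) := abs_of_nonpos (log_nonpos (by linarith) (by linarith))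
    _ ≤ 2 * log 2 * 2⁻¹ ^ d := neg_log_one_sub_le_two_mul_log_two_mul hx₀.le hx

theorem stmt_3_general (n : ℕ) :
    |∑ d ∈ n.divisors, (ArithmeticFunction.moebius (n / d) : ℝ)
        * Real.log (1 - (2 : ℝ) ^ (-(d : ℤ)))| ≤ 2 * Real.log 2 := by
  calc |∑ d ∈ n.divisors, (ArithmeticFunction.moebius (n / d) : ℝ)
        * log (1 - (2 : ℝ) ^ (-(d : ℤ)))|
      ≤ ∑ d ∈ n.divisors, 2 * log 2 * (2⁻¹ : ℝ) ^ d :=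
        (abs_sum_le_sum_abs _ _).trans <| sum_le_sum fun d hd ↦
          abs_moebius_mul_log_one_sub_two_zpow_le _ (Nat.pos_of_mem_divisors hd)
    _ = 2 * log 2 * ∑ d ∈ n.divisors, (2⁻¹ : ℝ) ^ d := (mul_sum _ _ _).symm
    _ ≤ 2 * log 2 * 1 := by
        gcongr
        exact sum_divisors_inv_two_pow_le_one n
    _ = 2 * log 2 := mul_one _

theorem stmt_3 (n : ℕ) (hn : 1 ≤ n) :
    |∑ d ∈ n.divisors, (ArithmeticFunction.moebius (n / d) : ℝ)
        * Real.log (1 - (2 : ℝ) ^ (-(d : ℤ)))| ≤ 2 * Real.log 2 :=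
  stmt_3_general n
end

section
/- For every n ≥ 2, the greatest common divisor of Φ_n(2) and ∏_{d ∣ n, d < n} Φ_d(2) divides the radical of n (the product of distinct primes dividing n), and in particular is at most n. -/
/-!
A prime `p` dividing both `Φ_n(a)` and some `Φ_d(a)` with `d ∣ n`, `d < n`, must divide `n`:
otherwise `a` would be a primitive root of unity of the two different orders `n` and `d`
in `ZMod p`. For such an odd `p`, write `n = p m`; Fermat gives `p ∣ a^m - 1`, and since
`(a^m - 1) Φ_n(a) ∣ a^n - 1` while lifting the exponent gives `v_p(a^n - 1) = v_p(a^m - 1) + 1`,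
we get `v_p(Φ_n(a)) ≤ 1`. For even `a` every such `p` is odd, so the gcd is squarefree.
-/

open Polynomial

namespace Polynomial

theorem cyclotomic_eval_dvd_pow_sub_one {R : Type*} [CommRing R] (n : ℕ) (a : R) :
    (cyclotomic n R).eval a ∣ a ^ n - 1 := by
  simpa using eval_dvd (x := a) (cyclotomic.dvd_X_pow_sub_one n R)

theorem isRoot_cyclotomic_zmod_of_dvd_eval {p n : ℕ} {a : ℤ}
    (h : (p : ℤ) ∣ (cyclotomic n ℤ).eval a) : (cyclotomic n (ZMod p)).IsRoot (a : ZMod p) := by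
  rwa [IsRoot, ← map_cyclotomic_int, eval_intCast_map, eq_intCast,
    ZMod.intCast_zmod_eq_zero_iff_dvd]

theorem prime_dvd_of_dvd_cyclotomic_eval_of_dvd {p d n : ℕ} [Fact p.Prime] {a : ℤ}
    (hdn : d ∣ n) (hne : d ≠ n) (hd : (p : ℤ) ∣ (cyclotomic d ℤ).eval a)
    (hn : (p : ℤ) ∣ (cyclotomic n ℤ).eval a) : p ∣ n := by
  by_contra hpn
  have : NeZero (n : ZMod p) := ⟨mt (ZMod.natCast_eq_zero_iff n p).1 hpn⟩
  have : NeZero (d : ZMod p) := ⟨fun h => hpn (((ZMod.natCast_eq_zero_iff d p).1 h).trans hdn)⟩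
  exact hne <| (isRoot_cyclotomic_iff.1 (isRoot_cyclotomic_zmod_of_dvd_eval hd)).eq_orderOf.trans
    (isRoot_cyclotomic_iff.1 (isRoot_cyclotomic_zmod_of_dvd_eval hn)).eq_orderOf.symm

theorem prime_dvd_of_dvd_gcd_cyclotomic_eval {p n : ℕ} (hp : p.Prime) (a : ℤ)
    (h : p ∣ Int.gcd ((cyclotomic n ℤ).eval a)
      (∏ d ∈ n.properDivisors, (cyclotomic d ℤ).eval a)) : p ∣ n := by
  have : Fact p.Prime := ⟨hp⟩
  have h' := Int.natCast_dvd_natCast.2 h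
  obtain ⟨d, hd, hpd⟩ := (Nat.prime_iff_prime_int.mp hp).exists_mem_finset_dvd
    (h'.trans (Int.gcd_dvd_right _ _))
  obtain ⟨hdn, hlt⟩ := Nat.mem_properDivisors.1 hd
  exact prime_dvd_of_dvd_cyclotomic_eval_of_dvd hdn hlt.ne hpd (h'.trans (Int.gcd_dvd_left _ _))

theorem not_sq_dvd_cyclotomic_eval_prime_mul {p m : ℕ} (hp : p.Prime) (hp2 : p ≠ 2)
    (hm : m ≠ 0) {a : ℤ} (ha : 1 < a) : ¬(p : ℤ) ^ 2 ∣ (cyclotomic (p * m) ℤ).eval a := by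
  have : Fact p.Prime := ⟨hp⟩
  have hpZ : Prime (p : ℤ) := Nat.prime_iff_prime_int.mp hp
  intro hsq
  have hp_pow : (p : ℤ) ∣ a ^ (p * m) - 1 :=
    (dvd_pow_self _ two_ne_zero).trans (hsq.trans (cyclotomic_eval_dvd_pow_sub_one _ a))
  have hp_sub : (p : ℤ) ∣ a ^ m - 1 := by
    rw [← ZMod.intCast_zmod_eq_zero_iff_dvd] at hp_pow ⊢
    push_cast at hp_pow ⊢
    rwa [mul_comm, pow_mul, ZMod.pow_card] at hp_pow
  have hp_pow_m : ¬(p : ℤ) ∣ a ^ m := fun h =>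
    hpZ.not_dvd_one (by simpa using dvd_sub h hp_sub)
  have hlte := emultiplicity_pow_prime_sub_pow_prime hpZ (hp.odd_of_ne_two hp2)
    (by simpa using hp_sub) hp_pow_m
  rw [← pow_mul, mul_comm m, one_pow] at hlte
  have hdvd : (a ^ m - 1) * (p : ℤ) ^ 2 ∣ a ^ (p * m) - 1 := by
    refine (mul_dvd_mul_left _ hsq).trans ?_
    simpa using eval_dvd (x := a) (X_pow_sub_one_mul_cyclotomic_dvd_X_pow_sub_one_of_dvd ℤ
      (Nat.mem_properDivisors.2 ⟨dvd_mul_left m p, lt_mul_left (Nat.pos_of_ne_zero hm) hp.one_lt⟩))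
  have hfin : FiniteMultiplicity (p : ℤ) (a ^ m - 1) :=
    Int.finiteMultiplicity_iff.2 ⟨by simpa using hp.ne_one,
      sub_ne_zero.2 (one_lt_pow₀ ha hm).ne'⟩
  have hle := emultiplicity_le_emultiplicity_of_dvd_right (a := (p : ℤ)) hdvd
  rw [emultiplicity_mul hpZ, hlte, emultiplicity_pow_self_of_prime hpZ,
    hfin.emultiplicity_eq_multiplicity] at hle
  norm_cast at hle
  omega

theorem squarefree_gcd_cyclotomic_eval {n : ℕ} (hn : n ≠ 0) {a : ℤ} (ha : 1 < a) (ha2 : Even a) :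
    Squarefree (Int.gcd ((cyclotomic n ℤ).eval a)
      (∏ d ∈ n.properDivisors, (cyclotomic d ℤ).eval a)) := by
  rw [Nat.squarefree_iff_prime_squarefree]
  intro p hp hsq
  have hpg := (dvd_mul_right p p).trans hsq
  obtain ⟨m, rfl⟩ := prime_dvd_of_dvd_gcd_cyclotomic_eval hp a hpg
  have hp2 : p ≠ 2 := by
    rintro rfl
    have h2 : (2 : ℤ) ∣ a ^ (2 * m) - 1 := (Int.natCast_dvd_natCast.2 hpg).trans <|
      (Int.gcd_dvd_left _ _).trans (cyclotomic_eval_dvd_pow_sub_one _ a)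
    exact Int.not_even_iff_odd.2 ((ha2.pow_of_ne_zero hn).sub_odd odd_one) (even_iff_two_dvd.2 h2)
  refine not_sq_dvd_cyclotomic_eval_prime_mul hp hp2 (right_ne_zero_of_mul hn) ha ?_
  simpa [sq] using (Int.natCast_dvd_natCast.2 hsq).trans (Int.gcd_dvd_left _ _)

end Polynomial

theorem Nat.dvd_prod_primeFactors_of_squarefree {g n : ℕ} (hg : Squarefree g) (hn : n ≠ 0)
    (h : ∀ p, p.Prime → p ∣ g → p ∣ n) : g ∣ ∏ p ∈ n.primeFactors, p := by
  rw [← Nat.prod_primeFactors_of_squarefree hg]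
  refine Finset.prod_dvd_prod_of_subset _ _ _ fun p hp => ?_
  rw [Nat.mem_primeFactors] at hp ⊢
  exact ⟨hp.1, h p hp.1 hp.2.1, hn⟩

theorem stmt_5 (n : ℕ) (hn : 2 ≤ n) :
    Int.gcd ((Polynomial.cyclotomic n ℤ).eval 2)
        (∏ d ∈ n.properDivisors, (Polynomial.cyclotomic d ℤ).eval 2)
      ∣ (∏ p ∈ n.primeFactors, p) ∧
    Int.gcd ((Polynomial.cyclotomic n ℤ).eval 2)
        (∏ d ∈ n.properDivisors, (Polynomial.cyclotomic d ℤ).eval 2) ≤ n := by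
  have hn0 : n ≠ 0 := by omega
  have hdvd := Nat.dvd_prod_primeFactors_of_squarefree
    (squarefree_gcd_cyclotomic_eval hn0 one_lt_two even_two)
    hn0 fun p hp => prime_dvd_of_dvd_gcd_cyclotomic_eval hp 2
  exact ⟨hdvd, Nat.le_of_dvd (by omega) (hdvd.trans (Nat.prod_primeFactors_dvd n))⟩
end

section
/- Fix n ≥ 1 and let S be any set of primes containing all primes p whose multiplicative order of 2 modulo p equals n. Then ∏_{p ∈ S, p ∣ 2^n-1} |2^n - 1|_p ≤ n / 2^{φ(n) - 2}, where |·|_p is the normalized p-adic absolute value and φ is Euler's totient function. -/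
/-!
Let `N = 2 ^ n - 1`. If a prime `p` divides `Φ_n(2)` and `2` has order `d ≠ n` modulo `p`,
then `d` is a proper divisor of `n`, `(2 ^ d - 1) * Φ_n(2)` divides `N`, and lifting the exponent
gives `v_p(Φ_n(2)) ≤ v_p(N) - v_p(2 ^ d - 1) = v_p(n / d) ≤ v_p(n)`. Every other prime factor of
`Φ_n(2)` lies in `S`, so `Φ_n(2)` divides `n` times the `S`-part of `N`, whose reciprocal is the
left-hand side. By Möbius inversion `Φ_n(2) = 2 ^ φ(n) * ∏_{d ∣ n} (1 - 2⁻ᵈ) ^ μ(n / d)`, and since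
`μ ≤ 1` this product is at least `∏_{d ∣ n} (1 - 2⁻ᵈ) ≥ 1 / 4`.
-/

open Finset Polynomial ArithmeticFunction
open scoped ArithmeticFunction.Moebius

theorem one_sub_sum_le_prod_one_sub {R ι : Type*} [CommRing R] [LinearOrder R]
    [IsStrictOrderedRing R] (s : Finset ι) {x : ι → R}
    (h0 : ∀ i ∈ s, 0 ≤ x i) (h1 : ∀ i ∈ s, x i ≤ 1) :
    1 - ∑ i ∈ s, x i ≤ ∏ i ∈ s, (1 - x i) := by
  induction s using Finset.cons_induction with
  | empty => simp
  | cons a s ha ih =>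
    simp only [forall_mem_cons] at h0 h1
    rw [sum_cons, prod_cons]
    have hs : 0 ≤ ∑ i ∈ s, x i := sum_nonneg h0.2
    nlinarith [mul_le_mul_of_nonneg_left (ih h0.2 h1.2) (sub_nonneg.2 h1.1), mul_nonneg h0.1 hs]

theorem sum_inv_two_pow_le_half (s : Finset ℕ) (hs : ∀ d ∈ s, 2 ≤ d) :
    ∑ d ∈ s, (2⁻¹ : ℝ) ^ d ≤ 1 / 2 := by
  obtain ⟨m, hm⟩ := s.exists_nat_subset_range
  calc ∑ d ∈ s, (2⁻¹ : ℝ) ^ d ≤ ∑ d ∈ Ico 2 m, (2⁻¹ : ℝ) ^ d :=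
        sum_le_sum_of_subset_of_nonneg (fun d hd => mem_Ico.2 ⟨hs d hd, mem_range.1 (hm hd)⟩)
          fun _ _ _ => by positivity
    _ ≤ (2⁻¹ : ℝ) ^ 2 / (1 - 2⁻¹) := geom_sum_Ico_le_of_lt_one (by norm_num) (by norm_num)
    _ = 1 / 2 := by norm_num

theorem one_div_four_le_prod_one_sub_inv_two_pow (s : Finset ℕ) (hs : 0 ∉ s) :
    1 / 4 ≤ ∏ d ∈ s, (1 - (2⁻¹ : ℝ) ^ d) := by
  have hrest : 1 / 2 ≤ ∏ d ∈ s.erase 1, (1 - (2⁻¹ : ℝ) ^ d) := by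
    have hsum := sum_inv_two_pow_le_half (s.erase 1) fun d hd => by
      obtain ⟨hd1, hd⟩ := mem_erase.1 hd
      have : d ≠ 0 := fun h => hs (h ▸ hd)
      omega
    have := one_sub_sum_le_prod_one_sub (s.erase 1) (x := fun d => (2⁻¹ : ℝ) ^ d)
      (fun _ _ => by positivity) fun _ _ => pow_le_one₀ (by norm_num) (by norm_num)
    linarith
  by_cases h1 : 1 ∈ s
  · rw [← mul_prod_erase s _ h1]
    norm_num at hrest ⊢
    linarith
  · rw [erase_eq_of_notMem h1] at hrest
    linarith

theorem zpow_sum₀ {G ι : Type*} [CommGroupWithZero G] {a : G} (ha : a ≠ 0) (s : Finset ι)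
    (f : ι → ℤ) : a ^ ∑ i ∈ s, f i = ∏ i ∈ s, a ^ f i := by
  induction s using cons_induction with
  | empty => simp
  | cons i s hi ih => rw [sum_cons, prod_cons, zpow_add₀ ha, ih]

theorem cyclotomic_eval_eq_prod_pow_moebius {K : Type*} [Field K] {x : K}
    (hx : ∀ m, 0 < m → x ^ m ≠ 1) {n : ℕ} (hn : 0 < n) :
    (cyclotomic n K).eval x = ∏ d ∈ n.divisorsAntidiagonal, (x ^ d.2 - 1) ^ μ d.1 := by
  have hprod : ∀ m > 0, ∏ d ∈ m.divisors, (cyclotomic d K).eval x = x ^ m - 1 := fun m hm => by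
    rw [← eval_prod, prod_cyclotomic_eq_X_pow_sub_one hm]
    simp
  have hsub : ∀ m, 0 < m → x ^ m - 1 ≠ 0 := fun m hm => sub_ne_zero.2 (hx m hm)
  have heval : ∀ m, 0 < m → (cyclotomic m K).eval x ≠ 0 := fun m hm =>
    prod_ne_zero_iff.1 ((hprod m hm).trans_ne (hsub m hm)) m (Nat.mem_divisors_self m hm.ne')
  exact ((prod_eq_iff_prod_pow_moebius_eq_of_nonzero heval hsub).1 hprod n hn).symm

theorem sum_moebius_mul_eq_totient {n : ℕ} (hn : 0 < n) :
    ∑ d ∈ n.divisorsAntidiagonal, μ d.1 * (d.2 : ℤ) = n.totient :=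
  (sum_eq_iff_sum_mul_moebius_eq (f := fun d => (d.totient : ℤ))).1
    (fun m _ => by exact_mod_cast Nat.sum_totient m) n hn

theorem cyclotomic_eval_two_eq_two_pow_totient_mul {n : ℕ} (hn : 0 < n) :
    (cyclotomic n ℝ).eval 2 =
      2 ^ n.totient * ∏ d ∈ n.divisorsAntidiagonal, (1 - (2⁻¹ : ℝ) ^ d.2) ^ μ d.1 := by
  have hsplit : ∀ b : ℕ, (2 : ℝ) ^ b - 1 = 2 ^ b * (1 - 2⁻¹ ^ b) := fun b => by
    rw [mul_sub, ← mul_pow]; norm_num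
  rw [cyclotomic_eval_eq_prod_pow_moebius (fun m hm => (one_lt_pow₀ one_lt_two hm.ne').ne') hn]
  simp only [hsplit, mul_zpow, prod_mul_distrib]
  congr 1
  rw [← zpow_natCast, ← sum_moebius_mul_eq_totient hn, zpow_sum₀ two_ne_zero]
  refine prod_congr rfl fun d _ => ?_
  rw [← zpow_natCast, ← zpow_mul, mul_comm]

theorem two_pow_totient_sub_two_le_cyclotomic_eval_two {n : ℕ} (hn : 0 < n) :
    (2 : ℝ) ^ ((n.totient : ℤ) - 2) ≤ (cyclotomic n ℝ).eval 2 := by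
  have hbase : ∀ d ∈ n.divisorsAntidiagonal, 0 < 1 - (2⁻¹ : ℝ) ^ d.2 ∧ 1 - (2⁻¹ : ℝ) ^ d.2 ≤ 1 :=
    fun d hd => ⟨sub_pos.2 (pow_lt_one₀ (by norm_num) (by norm_num)
      (Nat.pos_of_mem_divisors (Nat.snd_mem_divisors_of_mem_antidiagonal hd)).ne'),
      sub_le_self _ (by positivity)⟩
  have hquarter : 1 / 4 ≤ ∏ d ∈ n.divisorsAntidiagonal, (1 - (2⁻¹ : ℝ) ^ d.2) ^ μ d.1 :=
    calc 1 / 4 ≤ ∏ d ∈ n.divisors, (1 - (2⁻¹ : ℝ) ^ d) :=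
          one_div_four_le_prod_one_sub_inv_two_pow _ fun h => by simp at h
      _ = ∏ d ∈ n.divisorsAntidiagonal, (1 - (2⁻¹ : ℝ) ^ d.2) ^ (1 : ℤ) := by
          rw [Nat.prod_divisorsAntidiagonal' (fun _ b => (1 - (2⁻¹ : ℝ) ^ b) ^ (1 : ℤ))]
          simp
      _ ≤ _ := prod_le_prod (fun d hd => (zpow_pos (hbase d hd).1 _).le) fun d hd =>
          zpow_le_zpow_right_of_le_one₀ (hbase d hd).1 (hbase d hd).2
            (le_of_abs_le abs_moebius_le_one)
  calc (2 : ℝ) ^ ((n.totient : ℤ) - 2) = 2 ^ n.totient * (1 / 4) := by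
        rw [zpow_sub₀ two_ne_zero, zpow_natCast]; ring
    _ ≤ _ := by rw [cyclotomic_eval_two_eq_two_pow_totient_mul hn]; gcongr

-- `toNat` loses nothing here: `Φ_n(a) ≥ 0` for `a ≥ 1`.
noncomputable def cyclotomicEvalNat (n a : ℕ) : ℕ := ((cyclotomic n ℤ).eval (a : ℤ)).toNat

theorem cast_cyclotomicEvalNat {R : Type*} [CommRing R] {a : ℕ} (ha : 1 ≤ a) (n : ℕ) :
    (cyclotomicEvalNat n a : R) = (cyclotomic n R).eval (a : R) := by
  have hint : (cyclotomicEvalNat n a : ℤ) = (cyclotomic n ℤ).eval (a : ℤ) :=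
    Int.toNat_of_nonneg (cyclotomic_nonneg n (by exact_mod_cast ha))
  rw [← Int.cast_natCast, hint, ← map_cyclotomic_int n R, eval_natCast_map, eq_intCast]

theorem cyclotomicEvalNat_pos {a : ℕ} (ha : 1 < a) (n : ℕ) : 0 < cyclotomicEvalNat n a := by
  have := cast_cyclotomicEvalNat (R := ℤ) ha.le n
  have := cyclotomic_pos' n (R := ℤ) (x := a) (by exact_mod_cast ha)
  omega

theorem prod_cyclotomicEvalNat {a : ℕ} (ha : 1 ≤ a) {m : ℕ} (hm : 0 < m) :
    ∏ d ∈ m.divisors, cyclotomicEvalNat d a = a ^ m - 1 := by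
  apply Nat.cast_injective (R := ℤ)
  simp only [Nat.cast_prod, cast_cyclotomicEvalNat ha, ← eval_prod,
    prod_cyclotomic_eq_X_pow_sub_one hm]
  simp [Nat.cast_sub (Nat.one_le_pow _ _ ha)]

theorem cyclotomicEvalNat_dvd {a : ℕ} (ha : 1 ≤ a) {n : ℕ} (hn : 0 < n) :
    cyclotomicEvalNat n a ∣ a ^ n - 1 := by
  rw [← prod_cyclotomicEvalNat ha hn]
  exact dvd_prod_of_mem _ (Nat.mem_divisors_self n hn.ne')

theorem pow_sub_one_mul_cyclotomicEvalNat_dvd {a : ℕ} (ha : 1 ≤ a) {d n : ℕ} (hdn : d ∣ n)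
    (hlt : d < n) : (a ^ d - 1) * cyclotomicEvalNat n a ∣ a ^ n - 1 := by
  have hn : 0 < n := by omega
  have hd : 0 < d := Nat.pos_of_dvd_of_pos hdn hn
  have hsub : d.divisors ⊆ n.divisors.erase n := fun e he =>
    mem_erase.2 ⟨(Nat.divisor_le he).trans_lt hlt |>.ne,
      Nat.mem_divisors.2 ⟨(Nat.dvd_of_mem_divisors he).trans hdn, hn.ne'⟩⟩
  rw [← prod_cyclotomicEvalNat ha hd, ← prod_cyclotomicEvalNat ha hn,
    ← mul_prod_erase _ _ (Nat.mem_divisors_self n hn.ne'), mul_comm]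
  exact mul_dvd_mul_left _ (prod_dvd_prod_of_subset _ _ _ hsub)

theorem Nat.factorization_pow_sub_one {x k p : ℕ} (hp : p.Prime) (hp2 : p ≠ 2) (hx : 1 < x)
    (hpx : p ∣ x - 1) (hk : k ≠ 0) :
    (x ^ k - 1).factorization p = (x - 1).factorization p + k.factorization p := by
  have : Fact p.Prime := ⟨hp⟩
  have hpx' : ¬p ∣ x := fun h => hp.one_lt.ne' (Nat.dvd_one.1 (by
    simpa [Nat.sub_sub_self hx.le] using Nat.dvd_sub h hpx))
  simpa [Nat.factorization_def _ hp] using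
    padicValNat.pow_sub_pow (hp.odd_of_ne_two hp2) hx (by simpa using hpx) hpx' hk

theorem factorization_cyclotomicEvalNat_le {a n p : ℕ} (ha : 1 < a) (hn : 0 < n) (hp : p.Prime)
    (hp2 : p ≠ 2) (hord : orderOf (a : ZMod p) ≠ n) :
    (cyclotomicEvalNat n a).factorization p ≤ n.factorization p := by
  by_cases hpΦ : p ∣ cyclotomicEvalNat n a
  swap
  · simp [Nat.factorization_eq_zero_of_not_dvd hpΦ]
  have hpow : ∀ m, p ∣ a ^ m - 1 ↔ (a : ZMod p) ^ m = 1 := fun m => by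
    rw [← ZMod.natCast_eq_zero_iff, Nat.cast_sub (Nat.one_le_pow _ _ (by omega)), sub_eq_zero]
    push_cast; rfl
  set d := orderOf (a : ZMod p)
  have hdn : d ∣ n := orderOf_dvd_of_pow_eq_one
    ((hpow n).1 (hpΦ.trans (cyclotomicEvalNat_dvd ha.le hn)))
  obtain ⟨k, hk⟩ := hdn
  have hk0 : k ≠ 0 := by rintro rfl; omega
  have hlt : d < n := lt_of_le_of_ne (Nat.le_of_dvd hn ⟨k, hk⟩) hord
  have hd : 0 < d := Nat.pos_of_dvd_of_pos ⟨k, hk⟩ hn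
  have hlte : (a ^ n - 1).factorization p = (a ^ d - 1).factorization p + k.factorization p := by
    rw [hk, pow_mul]
    exact Nat.factorization_pow_sub_one hp hp2 (Nat.one_lt_pow hd.ne' ha)
      ((hpow d).2 (pow_orderOf_eq_one _)) hk0
  have had : a ^ d - 1 ≠ 0 := Nat.sub_ne_zero_of_lt (Nat.one_lt_pow hd.ne' ha)
  have hdvd := (Nat.factorization_le_iff_dvd
    (mul_ne_zero had (cyclotomicEvalNat_pos ha n).ne')
    (Nat.sub_ne_zero_of_lt (Nat.one_lt_pow hn.ne' ha))).2
    (pow_sub_one_mul_cyclotomicEvalNat_dvd ha.le ⟨k, hk⟩ hlt) p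
  rw [Nat.factorization_mul had (cyclotomicEvalNat_pos ha n).ne', Finsupp.add_apply] at hdvd
  have hkn := (Nat.factorization_le_iff_dvd hk0 hn.ne').2 (Dvd.intro_left d hk.symm) p
  omega

theorem Nat.factorization_prod_primeFactors_filter (N : ℕ) (P : ℕ → Prop) [DecidablePred P] :
    (∏ p ∈ N.primeFactors.filter P, p ^ N.factorization p).factorization =
      N.factorization.filter P := by
  have hprod : ∏ p ∈ N.primeFactors.filter P, p ^ N.factorization p =
      (N.factorization.filter P).prod (· ^ ·) := by
    rw [Finsupp.prod, Finsupp.support_filter, Nat.support_factorization]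
    exact prod_congr rfl fun p hp => by rw [Finsupp.filter_apply_pos _ _ (mem_filter.1 hp).2]
  refine hprod ▸ Nat.prod_pow_factorization_eq_self fun p hp => ?_
  rw [Finsupp.support_filter, Nat.support_factorization] at hp
  exact Nat.prime_of_mem_primeFactors (mem_filter.1 hp).1

theorem Nat.prod_primeFactors_filter_pow_factorization_pos (N : ℕ) (P : ℕ → Prop)
    [DecidablePred P] : 0 < ∏ p ∈ N.primeFactors.filter P, p ^ N.factorization p :=
  prod_pos fun _ hp => pow_pos (Nat.prime_of_mem_primeFactors (mem_filter.1 hp).1).pos _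

theorem cyclotomicEvalNat_dvd_mul_prod {a n : ℕ} (ha : 1 < a) (ha2 : Even a) (hn : 0 < n)
    {S : Set ℕ} [DecidablePred (· ∈ S)]
    (hS : ∀ p : ℕ, p.Prime → p ≠ 2 → orderOf (a : ZMod p) = n → p ∈ S) :
    cyclotomicEvalNat n a ∣
      n * ∏ p ∈ (a ^ n - 1).primeFactors.filter (· ∈ S), p ^ (a ^ n - 1).factorization p := by
  set N := a ^ n - 1
  have hN : N ≠ 0 := Nat.sub_ne_zero_of_lt (Nat.one_lt_pow hn.ne' ha)
  have hP := (Nat.prod_primeFactors_filter_pow_factorization_pos N (· ∈ S)).ne'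
  have hΦN := cyclotomicEvalNat_dvd ha.le hn
  rw [← Nat.factorization_le_iff_dvd (cyclotomicEvalNat_pos ha n).ne' (mul_ne_zero hn.ne' hP),
    Nat.factorization_mul hn.ne' hP, Nat.factorization_prod_primeFactors_filter]
  intro p
  simp only [Finsupp.add_apply, Finsupp.filter_apply]
  by_cases hp : p.Prime
  swap
  · simp [Nat.factorization_eq_zero_of_not_prime _ hp]
  by_cases hp2 : p = 2
  · subst hp2
    have hodd : Odd N :=
      Nat.Even.sub_odd (Nat.one_le_pow _ _ (by omega)) (ha2.pow_of_ne_zero hn.ne') odd_one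
    have h2Φ : ¬2 ∣ cyclotomicEvalNat n a := fun h =>
      Nat.not_even_iff_odd.2 hodd (even_iff_two_dvd.2 (h.trans hΦN))
    simp [Nat.factorization_eq_zero_of_not_dvd h2Φ]
  by_cases hord : orderOf (a : ZMod p) = n
  · rw [if_pos (hS p hp hp2 hord)]
    have := (Nat.factorization_le_iff_dvd (cyclotomicEvalNat_pos ha n).ne' hN).2 hΦN p
    omega
  · have := factorization_cyclotomicEvalNat_le ha hn hp hp2 hord
    omega

open scoped Classical

theorem stmt_6 (n : ℕ) (hn : 1 ≤ n) (S : Set ℕ)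
    (hS : ∀ p : ℕ, p.Prime → p ≠ 2 → orderOf (2 : ZMod p) = n → p ∈ S) :
    ∏ p ∈ (2 ^ n - 1 : ℕ).primeFactors.filter (fun p => p ∈ S),
        (p : ℝ) ^ (-(((2 ^ n - 1 : ℕ).factorization p : ℤ)))
      ≤ (n : ℝ) / (2 : ℝ) ^ ((n.totient : ℤ) - 2) := by
  set N := 2 ^ n - 1
  set P := ∏ p ∈ N.primeFactors.filter (· ∈ S), p ^ N.factorization p
  have hlhs : ∏ p ∈ N.primeFactors.filter (· ∈ S), (p : ℝ) ^ (-(N.factorization p : ℤ)) =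
      (P : ℝ)⁻¹ := by
    simp only [P, Nat.cast_prod, Nat.cast_pow, ← prod_inv_distrib, zpow_neg, zpow_natCast]
  have hdvd : cyclotomicEvalNat n 2 ∣ n * P :=
    cyclotomicEvalNat_dvd_mul_prod one_lt_two even_two hn fun p hp hp2 hord =>
      hS p hp hp2 (by exact_mod_cast hord)
  have hP : 0 < P := Nat.prod_primeFactors_filter_pow_factorization_pos N (· ∈ S)
  have hΦ : (cyclotomic n ℝ).eval 2 ≤ n * P := by
    have := Nat.le_of_dvd (Nat.mul_pos hn hP) hdvd
    rw [← Nat.cast_ofNat, ← cast_cyclotomicEvalNat one_le_two]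
    exact_mod_cast this
  rw [hlhs, inv_eq_one_div, div_le_div_iff₀ (by positivity) (by positivity), one_mul]
  exact (two_pow_totient_sub_two_le_cyclotomic_eval_two hn).trans (by exact_mod_cast hΦ)
end

section
/- Let S' be a finite set of primes and set k' = ∏_{p∈S'} p/(p+1). Suppose there exists A > 4 such that |∑_{n≤N} |n|_{S'}/n − k'·log N| ≤ A for all N > 1, where |n|_{S'} = ∏_{p∈S'} |n|_p. Then for any prime q ∉ S' with q ≥ 3, setting S'' = S' ∪ {q} and k'' = ∏_{p∈S''} p/(p+1), one has |∑_{n≤N} |n|_{S''}/n − k''·log N| ≤ 2A for all N > 1. -/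
/-!
Write `E_S(N) = ∑_{n ≤ N} |n|_S / n - k_S log N`. Splitting off the multiples `n = q m` of `q`
gives `E_{S''}(N) = E_{S'}(N) - E_{S'}(N/q)/q + E_{S''}(N/q)/q² + k'/(q+1) · log (N / ⌊N/q⌋)`,
where the last term lies in `[0, 1]`. Strong induction on `N` then closes, because
`A + A/q + 2A/q² + 1 ≤ 2A` for `q ≥ 3` and `A ≥ 9/4`.
-/

open Finset Real

theorem Nat.filter_dvd_Icc_one_eq_map {q : ℕ} (hq : 0 < q) (N : ℕ) :
    {n ∈ Icc 1 N | q ∣ n} =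
      (Icc 1 (N / q)).map ⟨(q * ·), mul_right_injective₀ hq.ne'⟩ := by
  ext n
  simp only [mem_filter, mem_Icc, mem_map, Function.Embedding.coeFn_mk,
    Nat.le_div_iff_mul_le hq]
  constructor
  · rintro ⟨⟨h1, hN⟩, m, rfl⟩
    exact ⟨m, ⟨Nat.pos_of_mul_pos_left h1, by linarith⟩, rfl⟩
  · rintro ⟨m, ⟨h1, hN⟩, rfl⟩
    exact ⟨⟨Nat.mul_pos hq h1, by linarith⟩, dvd_mul_right q m⟩

theorem Finset.sum_filter_dvd_Icc_one {M : Type*} [AddCommMonoid M] {q : ℕ} (hq : 0 < q) (N : ℕ)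
    (f : ℕ → M) :
    ∑ n ∈ Icc 1 N with q ∣ n, f n = ∑ m ∈ Icc 1 (N / q), f (q * m) := by
  rw [Nat.filter_dvd_Icc_one_eq_map hq, sum_map]
  rfl

namespace Real

theorem log_natCast_le_log_natCast {a b : ℕ} (h : a ≤ b) : log a ≤ log b := by
  rcases a.eq_zero_or_pos with rfl | ha
  · simpa using log_natCast_nonneg b
  · exact log_le_log (by exact_mod_cast ha) (by exact_mod_cast h)

theorem log_sub_log_div_nonneg (q N : ℕ) : 0 ≤ log N - log ↑(N / q) :=
  sub_nonneg.mpr (log_natCast_le_log_natCast (Nat.div_le_self N q))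

theorem log_sub_log_div_le {q : ℕ} (hq : 0 < q) (N : ℕ) :
    log N - log ↑(N / q) ≤ log (2 * q) := by
  rcases (N / q).eq_zero_or_pos with hM | hM
  · have hN : N ≤ 2 * q := by have := (Nat.div_eq_zero_iff_lt hq).mp hM; omega
    simpa [hM] using log_natCast_le_log_natCast hN
  · have hN : N ≤ 2 * q * (N / q) := by
      have := Nat.lt_div_mul_add (a := N) hq
      nlinarith
    rw [sub_le_iff_le_add, ← log_mul (by positivity) (by positivity)]
    simpa using log_natCast_le_log_natCast hN

theorem log_two_mul_le {q : ℕ} (hq : 0 < q) : log (2 * q) ≤ q := by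
  have hq' : (0 : ℝ) < q := by exact_mod_cast hq
  rw [log_mul two_ne_zero hq'.ne']
  linarith [log_le_sub_one_of_pos two_pos, log_le_sub_one_of_pos hq']

end Real

namespace SAdic

noncomputable def sNorm (S : Finset ℕ) (n : ℕ) : ℝ :=
  ∏ p ∈ S, (p : ℝ) ^ (-(n.factorization p : ℤ))

noncomputable def harmonicSum (S : Finset ℕ) (N : ℕ) : ℝ :=
  ∑ n ∈ Icc 1 N, sNorm S n / n

noncomputable def density (S : Finset ℕ) : ℝ :=
  ∏ p ∈ S, (p : ℝ) / (p + 1)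

noncomputable def error (S : Finset ℕ) (N : ℕ) : ℝ :=
  harmonicSum S N - density S * log N

variable {S : Finset ℕ} {q : ℕ}

theorem sNorm_one (S : Finset ℕ) : sNorm S 1 = 1 := by
  simp [sNorm]

theorem sNorm_insert (hqS : q ∉ S) (n : ℕ) :
    sNorm (insert q S) n = (q : ℝ) ^ (-(n.factorization q : ℤ)) * sNorm S n :=
  prod_insert hqS

theorem sNorm_insert_of_not_dvd (hqS : q ∉ S) {n : ℕ} (hn : ¬q ∣ n) :
    sNorm (insert q S) n = sNorm S n := by
  simp [sNorm_insert hqS, Nat.factorization_eq_zero_of_not_dvd hn]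

theorem sNorm_prime_mul (hq : q.Prime) (hqS : q ∉ S) {m : ℕ} (hm : m ≠ 0) :
    sNorm S (q * m) = sNorm S m := by
  refine prod_congr rfl fun p hp => ?_
  have hqp : q ≠ p := fun h => hqS (h ▸ hp)
  simp [Nat.factorization_mul hq.ne_zero hm, hq.factorization, hqp]

theorem sNorm_insert_self_mul (hq : q.Prime) (hqS : q ∉ S) {m : ℕ} (hm : m ≠ 0) :
    sNorm (insert q S) (q * m) = (q : ℝ)⁻¹ * sNorm (insert q S) m := by
  have hq0 : (q : ℝ) ≠ 0 := by exact_mod_cast hq.ne_zero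
  rw [sNorm_insert hqS, sNorm_insert hqS, sNorm_prime_mul hq hqS hm,
    Nat.factorization_mul hq.ne_zero hm, Finsupp.add_apply, hq.factorization_self]
  push_cast
  rw [neg_add, zpow_add₀ hq0, zpow_neg_one]
  ring

theorem harmonicSum_insert (hq : q.Prime) (hqS : q ∉ S) (N : ℕ) :
    harmonicSum (insert q S) N = harmonicSum S N - (q : ℝ)⁻¹ * harmonicSum S (N / q)
      + ((q : ℝ) ^ 2)⁻¹ * harmonicSum (insert q S) (N / q) := by
  have hq0 : (q : ℝ) ≠ 0 := by exact_mod_cast hq.ne_zero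
  have split (T : Finset ℕ) : harmonicSum T N = ∑ n ∈ Icc 1 N with q ∣ n, sNorm T n / n
      + ∑ n ∈ Icc 1 N with ¬q ∣ n, sNorm T n / n :=
    (sum_filter_add_sum_filter_not _ _ _).symm
  have coprime_part : ∑ n ∈ Icc 1 N with ¬q ∣ n, sNorm (insert q S) n / n
      = ∑ n ∈ Icc 1 N with ¬q ∣ n, sNorm S n / n :=
    sum_congr rfl fun n hn => by rw [sNorm_insert_of_not_dvd hqS (mem_filter.mp hn).2]
  have multiples_S : ∑ n ∈ Icc 1 N with q ∣ n, sNorm S n / n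
      = (q : ℝ)⁻¹ * harmonicSum S (N / q) := by
    rw [sum_filter_dvd_Icc_one hq.pos, harmonicSum, mul_sum]
    refine sum_congr rfl fun m hm => ?_
    rw [sNorm_prime_mul hq hqS (by grind)]
    push_cast
    field_simp
  have multiples_insert : ∑ n ∈ Icc 1 N with q ∣ n, sNorm (insert q S) n / n
      = ((q : ℝ) ^ 2)⁻¹ * harmonicSum (insert q S) (N / q) := by
    rw [sum_filter_dvd_Icc_one hq.pos, harmonicSum, mul_sum]
    refine sum_congr rfl fun m hm => ?_
    rw [sNorm_insert_self_mul hq hqS (by grind)]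
    push_cast
    field_simp
  linarith [split S, split (insert q S)]

theorem density_insert (hqS : q ∉ S) : density (insert q S) = q / (q + 1) * density S :=
  prod_insert hqS

theorem density_nonneg (S : Finset ℕ) : 0 ≤ density S :=
  prod_nonneg fun _ _ => by positivity

theorem density_le_one (S : Finset ℕ) : density S ≤ 1 :=
  prod_le_one (fun _ _ => by positivity) fun p _ =>
    (div_le_one (by positivity)).mpr (by linarith)

theorem error_zero (S : Finset ℕ) : error S 0 = 0 := by
  simp [error, harmonicSum]

theorem error_one (S : Finset ℕ) : error S 1 = 1 := by
  simp [error, harmonicSum, sNorm_one]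

theorem error_insert (hq : q.Prime) (hqS : q ∉ S) (N : ℕ) :
    error (insert q S) N = error S N - (q : ℝ)⁻¹ * error S (N / q)
      + ((q : ℝ) ^ 2)⁻¹ * error (insert q S) (N / q)
      + density S / (q + 1) * (log N - log ↑(N / q)) := by
  have hq0 : (q : ℝ) ≠ 0 := by exact_mod_cast hq.ne_zero
  rw [error, error, error, error, harmonicSum_insert hq hqS, density_insert hqS]
  field_simp
  ring

theorem density_div_mul_log_sub_log_div_le_one (S : Finset ℕ) (hq : 0 < q) (N : ℕ) :
    density S / (q + 1) * (log N - log ↑(N / q)) ≤ 1 := by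
  have hq' : (0 : ℝ) < q := by exact_mod_cast hq
  calc density S / (q + 1) * (log N - log ↑(N / q))
      ≤ 1 / (q + 1) * q := by
        gcongr
        · exact log_sub_log_div_nonneg q N
        · exact density_le_one S
        · exact (log_sub_log_div_le hq N).trans (log_two_mul_le hq)
    _ ≤ 1 := by rw [one_div_mul_eq_div, div_le_one (by positivity)]; linarith

theorem abs_error_le_of_one_lt {A : ℝ} (hA : 1 ≤ A) (h : ∀ N, 1 < N → |error S N| ≤ A)
    (N : ℕ) : |error S N| ≤ A := by
  match N with
  | 0 => simpa [error_zero] using zero_le_one.trans hA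
  | 1 => simpa [error_one] using hA
  | N + 2 => exact h (N + 2) (by omega)

theorem abs_add_le_two_mul {A q e₀ e₁ e₂ L : ℝ} (hA : 9 / 4 ≤ A) (hq : 3 ≤ q)
    (he₀ : |e₀| ≤ A) (he₁ : |e₁| ≤ A) (he₂ : |e₂| ≤ 2 * A) (hL₀ : 0 ≤ L) (hL₁ : L ≤ 1) :
    |e₀ - q⁻¹ * e₁ + (q ^ 2)⁻¹ * e₂ + L| ≤ 2 * A := by
  have hq₁ : q⁻¹ ≤ 1 / 3 := by rw [inv_eq_one_div]; gcongr
  have hq₂ : (q ^ 2)⁻¹ ≤ 1 / 9 := by rw [inv_eq_one_div]; gcongr; nlinarith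
  have h₁ : |q⁻¹ * e₁| ≤ A / 3 := by
    rw [abs_mul, abs_of_pos (by positivity)]
    nlinarith [abs_nonneg e₁]
  have h₂ : |(q ^ 2)⁻¹ * e₂| ≤ 2 * A / 9 := by
    rw [abs_mul, abs_of_pos (by positivity)]
    nlinarith [abs_nonneg e₂]
  rw [abs_le] at *
  constructor <;> linarith

end SAdic

theorem stmt_11_general (S' : Finset ℕ)
    (A : ℝ) (hA : 4 < A)
    (hbound : ∀ N : ℕ, 1 < N →
      |(∑ n ∈ Finset.Icc 1 N,
          (∏ p ∈ S', (p : ℝ) ^ (-(n.factorization p : ℤ))) / n)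
        - (∏ p ∈ S', (p : ℝ) / (p + 1)) * Real.log N| ≤ A)
    (q : ℕ) (hq : q.Prime) (hq3 : 3 ≤ q) (hqS : q ∉ S') :
    ∀ N : ℕ, 1 < N →
      |(∑ n ∈ Finset.Icc 1 N,
          (∏ p ∈ insert q S', (p : ℝ) ^ (-(n.factorization p : ℤ))) / n)
        - (∏ p ∈ insert q S', (p : ℝ) / (p + 1)) * Real.log N| ≤ 2 * A := by
  have hE : ∀ N, |SAdic.error S' N| ≤ A := SAdic.abs_error_le_of_one_lt (by linarith) hbound
  suffices h : ∀ N, |SAdic.error (insert q S') N| ≤ 2 * A from fun N _ => h N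
  intro N
  induction N using Nat.strong_induction_on with
  | _ N ih =>
  rcases N.eq_zero_or_pos with rfl | hN
  · simpa [SAdic.error_zero] using (by linarith : (0 : ℝ) ≤ 2 * A)
  rw [SAdic.error_insert hq hqS]
  exact SAdic.abs_add_le_two_mul (by linarith) (by exact_mod_cast hq3) (hE N) (hE (N / q))
    (ih _ (Nat.div_lt_self hN hq.one_lt))
    (mul_nonneg (div_nonneg (SAdic.density_nonneg S') (by positivity))
      (Real.log_sub_log_div_nonneg q N))
    (SAdic.density_div_mul_log_sub_log_div_le_one S' hq.pos N)

theorem stmt_11 (S' : Finset ℕ) (hS' : ∀ p ∈ S', p.Prime)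
    (A : ℝ) (hA : 4 < A)
    (hbound : ∀ N : ℕ, 1 < N →
      |(∑ n ∈ Finset.Icc 1 N,
          (∏ p ∈ S', (p : ℝ) ^ (-(n.factorization p : ℤ))) / n)
        - (∏ p ∈ S', (p : ℝ) / (p + 1)) * Real.log N| ≤ A)
    (q : ℕ) (hq : q.Prime) (hq3 : 3 ≤ q) (hqS : q ∉ S') :
    ∀ N : ℕ, 1 < N →
      |(∑ n ∈ Finset.Icc 1 N,
          (∏ p ∈ insert q S', (p : ℝ) ^ (-(n.factorization p : ℤ))) / n)
        - (∏ p ∈ insert q S', (p : ℝ) / (p + 1)) * Real.log N| ≤ 2 * A :=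
  stmt_11_general S' A hA hbound q hq hq3 hqS
end

section
/- For every k ∈ [0,1] there exists a set L of primes (possibly infinite) such that ∏_{ℓ∈L}(1 − 1/ℓ) = k, where the infinite product is interpreted as the limit of partial products over increasing finite subsets. -/
/-!
Greedy construction: run through the primes in increasing order and keep `ℓ` whenever
multiplying by `1 - 1/ℓ` keeps the partial product `≥ k`. The partial products decrease and stay
`≥ k`, so they converge to some `c ≥ k`. If `c > k`, then, as `1 - 1/ℓ → 1`, every large prime
is kept; since `∑ 1/ℓ` diverges, the product over those primes tends to `0`, forcing `c ≤ 0`.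
-/

open scoped Classical

open Filter Finset Topology

theorem tendsto_prod_range_one_sub_zero_of_not_summable {f : ℕ → ℝ} (hf0 : ∀ n, 0 ≤ f n)
    (hf1 : ∀ n, f n ≤ 1) (hf : ¬ Summable f) :
    Tendsto (fun n ↦ ∏ i ∈ range n, (1 - f i)) atTop (𝓝 0) := by
  have hsum : Tendsto (fun n ↦ ∑ i ∈ range n, f i) atTop atTop :=
    (not_summable_iff_tendsto_nat_atTop_of_nonneg hf0).mp hf
  have hexp : Tendsto (fun n ↦ Real.exp (-∑ i ∈ range n, f i)) atTop (𝓝 0) :=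
    Real.tendsto_exp_atBot.comp (tendsto_neg_atTop_atBot.comp hsum)
  refine squeeze_zero (fun n ↦ prod_nonneg fun i _ ↦ sub_nonneg.mpr (hf1 i)) (fun n ↦ ?_) hexp
  calc ∏ i ∈ range n, (1 - f i)
      ≤ ∏ i ∈ range n, Real.exp (-f i) :=
        prod_le_prod (fun i _ ↦ sub_nonneg.mpr (hf1 i)) fun i _ ↦ Real.one_sub_le_exp_neg _
    _ = Real.exp (-∑ i ∈ range n, f i) := by rw [← Real.exp_sum, sum_neg_distrib]

theorem not_summable_indicator_inter_Ici {P : Set ℕ} {f : ℕ → ℝ}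
    (hf : ¬ Summable (P.indicator f)) (N : ℕ) :
    ¬ Summable ((P ∩ Set.Ici N).indicator f) := by
  rwa [← summable_nat_add_iff N, show (fun n ↦ (P ∩ Set.Ici N).indicator f (n + N))
    = fun n ↦ P.indicator f (n + N) by ext n; simp [Set.indicator_apply], summable_nat_add_iff]

theorem tendsto_prod_filter_zero_of_not_summable {P : Set ℕ} [DecidablePred (· ∈ P)]
    {a : ℕ → ℝ} (ha0 : ∀ n ∈ P, 0 ≤ a n) (ha1 : ∀ n ∈ P, a n ≤ 1)
    (hdiv : ¬ Summable (P.indicator (1 - a))) :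
    Tendsto (fun n ↦ ∏ i ∈ (range n).filter (· ∈ P), a i) atTop (𝓝 0) := by
  have hf1 (n : ℕ) : P.indicator (1 - a) n ≤ 1 := by
    by_cases hn : n ∈ P <;> simp [hn, ha0 n]
  refine (tendsto_prod_range_one_sub_zero_of_not_summable
    (Set.indicator_nonneg fun i hi ↦ by simpa using ha1 i hi) hf1 hdiv).congr fun n ↦ ?_
  rw [prod_filter]
  refine prod_congr rfl fun i _ ↦ ?_
  by_cases hi : i ∈ P <;> simp [hi]

section Greedy

variable (P : Set ℕ) (a : ℕ → ℝ) (k : ℝ)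

noncomputable def greedyProd : ℕ → ℝ
  | 0 => 1
  | n + 1 => if n ∈ P ∧ k ≤ greedyProd n * a n then greedyProd n * a n else greedyProd n

def greedySet : Set ℕ := {n | n ∈ P ∧ k ≤ greedyProd P a k n * a n}

variable {P a k}

theorem greedySet_subset : greedySet P a k ⊆ P := fun _ hn ↦ hn.1

theorem greedyProd_succ (n : ℕ) :
    greedyProd P a k (n + 1) =
      if n ∈ greedySet P a k then greedyProd P a k n * a n else greedyProd P a k n := by
  rw [greedyProd]
  -- the two `if`s differ only in their `Decidable` instances
  exact if_congr Iff.rfl rfl rfl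

theorem greedyProd_eq_prod_filter (n : ℕ) :
    greedyProd P a k n = ∏ i ∈ (range n).filter (· ∈ greedySet P a k), a i := by
  induction n with
  | zero => rfl
  | succ n ih =>
    rw [greedyProd_succ, range_add_one, filter_insert]
    split_ifs with hn
    · rw [prod_insert (by simp), ih, mul_comm]
    · rw [ih]

theorem le_greedyProd (hk : k ≤ 1) (n : ℕ) : k ≤ greedyProd P a k n := by
  induction n with
  | zero => exact hk
  | succ n ih =>
    rw [greedyProd_succ]
    split_ifs with hn
    exacts [hn.2, ih]

theorem greedyProd_antitone (ha0 : ∀ n ∈ P, 0 ≤ a n) (ha1 : ∀ n ∈ P, a n ≤ 1) :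
    Antitone (greedyProd P a k) := by
  refine antitone_nat_of_succ_le fun n ↦ ?_
  rw [greedyProd_succ]
  split_ifs with hn
  · have hprod : 0 ≤ greedyProd P a k n := by
      rw [greedyProd_eq_prod_filter]
      exact prod_nonneg fun i hi ↦ ha0 i (greedySet_subset (mem_filter.mp hi).2)
    exact mul_le_of_le_one_right hprod (ha1 n hn.1)
  · exact le_rfl

theorem mem_greedySet_of_le_mul {c : ℝ} (hc : ∀ m, c ≤ greedyProd P a k m)
    (ha0 : ∀ n ∈ P, 0 ≤ a n) {n : ℕ} (hn : n ∈ P) (hk : k ≤ c * a n) : n ∈ greedySet P a k :=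
  ⟨hn, hk.trans (mul_le_mul_of_nonneg_right (hc n) (ha0 n hn))⟩

theorem greedyProd_le_prod_tail (ha0 : ∀ n ∈ P, 0 ≤ a n) (ha1 : ∀ n ∈ P, a n ≤ 1) {N : ℕ}
    (hN : ∀ n ∈ P, N ≤ n → n ∈ greedySet P a k) (n : ℕ) :
    greedyProd P a k n ≤ ∏ i ∈ (range n).filter (· ∈ P ∩ Set.Ici N), a i := by
  rw [greedyProd_eq_prod_filter]
  refine prod_le_prod_of_subset_of_le_one (fun i hi ↦ ?_)
    (fun i hi ↦ ha0 i (greedySet_subset (mem_filter.mp hi).2))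
    (fun i hi _ ↦ ha1 i (greedySet_subset (mem_filter.mp hi).2))
  obtain ⟨hi, hiP, hiN⟩ := mem_filter.mp hi
  exact mem_filter.mpr ⟨hi, hN i hiP hiN⟩

theorem tendsto_greedyProd (hk : k ∈ Set.Icc 0 1) (ha0 : ∀ n ∈ P, 0 ≤ a n)
    (ha1 : ∀ n ∈ P, a n ≤ 1) (hlim : Tendsto a atTop (𝓝 1))
    (hdiv : ¬ Summable (P.indicator (1 - a))) :
    Tendsto (greedyProd P a k) atTop (𝓝 k) := by
  have hbdd : BddBelow (Set.range (greedyProd P a k)) :=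
    ⟨k, Set.forall_mem_range.mpr (le_greedyProd hk.2)⟩
  set c := ⨅ n, greedyProd P a k n
  have hc : ∀ n, c ≤ greedyProd P a k n := ciInf_le hbdd
  have hkc : k ≤ c := le_ciInf (le_greedyProd hk.2)
  have htend : Tendsto (greedyProd P a k) atTop (𝓝 c) :=
    tendsto_atTop_ciInf (greedyProd_antitone ha0 ha1) hbdd
  suffices c ≤ k by rwa [le_antisymm this hkc] at htend
  by_contra! hck
  have hc0 : 0 < c := hk.1.trans_lt hck
  obtain ⟨N, hN⟩ := eventually_atTop.mp (hlim.eventually (lt_mem_nhds ((div_lt_one hc0).mpr hck)))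
  have htail_mem (n : ℕ) (hnP : n ∈ P) (hnN : N ≤ n) : n ∈ greedySet P a k :=
    mem_greedySet_of_le_mul hc ha0 hnP ((div_lt_iff₀' hc0).mp (hN n hnN)).le
  have htail_zero := tendsto_prod_filter_zero_of_not_summable (fun n hn ↦ ha0 n hn.1)
    (fun n hn ↦ ha1 n hn.1) (not_summable_indicator_inter_Ici hdiv N)
  have : c ≤ 0 := ge_of_tendsto' htail_zero fun n ↦
    (hc n).trans (greedyProd_le_prod_tail ha0 ha1 htail_mem n)
  linarith

end Greedy

theorem exists_subset_tendsto_prod_filter {P : Set ℕ} {a : ℕ → ℝ} {k : ℝ}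
    (hk : k ∈ Set.Icc 0 1) (ha0 : ∀ n ∈ P, 0 ≤ a n) (ha1 : ∀ n ∈ P, a n ≤ 1)
    (hlim : Tendsto a atTop (𝓝 1)) (hdiv : ¬ Summable (P.indicator (1 - a))) :
    ∃ S ⊆ P, Tendsto (fun n ↦ ∏ i ∈ (range n).filter (· ∈ S), a i) atTop (𝓝 k) :=
  ⟨greedySet P a k, greedySet_subset, (tendsto_greedyProd hk ha0 ha1 hlim hdiv).congr
    greedyProd_eq_prod_filter⟩

theorem stmt_14 (k : ℝ) (hk : k ∈ Set.Icc (0 : ℝ) 1) :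
    ∃ L : Set ℕ, (∀ ℓ ∈ L, Nat.Prime ℓ) ∧
      Filter.Tendsto
        (fun x : ℕ => ∏ ℓ ∈ (Finset.range (x + 1)).filter (fun ℓ => ℓ ∈ L),
          (1 - 1 / (ℓ : ℝ)))
        Filter.atTop (nhds k) := by
  have hinv_le_one (n : ℕ) (hn : n.Prime) : 1 / (n : ℝ) ≤ 1 :=
    div_le_one_of_le₀ (by exact_mod_cast hn.one_lt.le) n.cast_nonneg
  have hlim : Tendsto (fun n : ℕ ↦ 1 - 1 / (n : ℝ)) atTop (𝓝 1) := by
    simpa using tendsto_one_div_atTop_nhds_zero_nat.const_sub (1 : ℝ)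
  have hdiv : ¬ Summable ({p | p.Prime}.indicator (1 - fun n : ℕ ↦ 1 - 1 / (n : ℝ))) := by
    simpa [Pi.sub_def] using not_summable_one_div_on_primes
  obtain ⟨L, hLP, hL⟩ := exists_subset_tendsto_prod_filter hk
    (fun n hn ↦ sub_nonneg.mpr (hinv_le_one n hn)) (fun n _ ↦ sub_le_self 1 (by positivity))
    hlim hdiv
  exact ⟨L, hLP, (tendsto_add_atTop_iff_nat 1).mpr hL⟩
end

section
/- Let (x_k) be a strictly increasing sequence of positive integers and (a_k) a sequence of positive rationals with a_k = p_k/q_k in lowest terms, such that the partial sums s_n = ∑_{k≤n} a_k converge to a real number α, and such that for infinitely many n, writing s_n = A_n/B_n in lowest terms, one has 0 < α − s_n ≤ C/B_n^3 for a fixed constant C. Then α is irrational, and if additionally α were algebraic then this contradicts Roth's theorem; hence α is transcendental (assuming Roth's theorem). -/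
/-!
Once the denominators `B` are large, `C / B ^ 3` is below both `1 / B ^ 2` and `B ^ (-5/2)`,
so the partial sums lie infinitely often in each of the sets
`{q | |α - q| < 1 / q.den ^ 2}` and `{q | |α - q| < q.den ^ (-5/2)}`; since their
denominators are unbounded, both sets are infinite. A rational number has only finitely many
approximations of the first kind, and by Roth an algebraic irrational only finitely many of the
second.
-/

open Filter

theorem Set.infinite_of_frequently_mem_of_tendsto_den {S : Set ℚ} {q : ℕ → ℚ}
    (hden : Tendsto (fun n => (q n).den) atTop atTop) (hS : ∃ᶠ n in atTop, q n ∈ S) :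
    S.Infinite := by
  intro hfin
  obtain ⟨D, hD⟩ := (hfin.image Rat.den).bddAbove
  obtain ⟨n, hnS, hnD⟩ := (hS.and_eventually (hden.eventually_gt_atTop D)).exists
  exact (hD ⟨q n, hnS, rfl⟩).not_gt hnD

theorem Filter.Frequently.abs_sub_lt_of_eventually_div_pow_three_lt {α C : ℝ} {q : ℕ → ℚ}
    {f : ℝ → ℝ} (happrox : ∃ᶠ n in atTop, |α - q n| ≤ C / ((q n).den : ℝ) ^ 3)
    (hden : Tendsto (fun n => (q n).den) atTop atTop)
    (hf : ∀ᶠ t in atTop, C / t ^ 3 < f t) :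
    ∃ᶠ n in atTop, |α - q n| < f (q n).den :=
  (happrox.and_eventually ((tendsto_natCast_atTop_atTop.comp hden).eventually hf)).mono
    fun _ h => h.1.trans_lt h.2

theorem Real.eventually_div_pow_three_lt_one_div_sq (C : ℝ) :
    ∀ᶠ t : ℝ in atTop, C / t ^ 3 < 1 / t ^ 2 := by
  filter_upwards [eventually_gt_atTop (max C 0)] with t ht
  have ht0 : 0 < t := (le_max_right C 0).trans_lt ht
  rw [div_lt_div_iff₀ (by positivity) (by positivity)]
  nlinarith [(le_max_left C 0).trans_lt ht, pow_pos ht0 2]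

theorem Real.eventually_div_pow_three_lt_rpow (C : ℝ) {ε : ℝ} (hε : ε < 1) :
    ∀ᶠ t : ℝ in atTop, C / t ^ 3 < t ^ (-(2 + ε)) := by
  filter_upwards [(tendsto_rpow_atTop (sub_pos.2 hε)).eventually_gt_atTop C,
    eventually_gt_atTop 0] with t hC ht
  have hpow : t ^ (-(2 + ε)) = t ^ (1 - ε) / t ^ 3 := by
    rw [← rpow_sub_natCast ht.ne']
    congr 1
    push_cast
    ring
  rw [hpow]
  exact div_lt_div_of_pos_right hC (by positivity)

theorem stmt_17_general
    (roth : ∀ α : ℝ, Irrational α → IsAlgebraic ℚ α → ∀ ε : ℝ, 0 < ε →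
      {q : ℚ | |α - (q : ℝ)| < ((q.den : ℝ)) ^ (-(2 + ε))}.Finite)
    (a : ℕ → ℚ)
    (α : ℝ) (C : ℝ)
    (happrox : ∀ N : ℕ, ∃ n ≥ N,
      0 < α - ((∑ k ∈ Finset.range (n + 1), a k : ℚ) : ℝ) ∧
      α - ((∑ k ∈ Finset.range (n + 1), a k : ℚ) : ℝ)
        ≤ C / ((∑ k ∈ Finset.range (n + 1), a k : ℚ).den : ℝ) ^ 3)
    (hden : Tendsto (fun n : ℕ => (∑ k ∈ Finset.range (n + 1), a k : ℚ).den)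
      atTop atTop) :
    Irrational α ∧ Transcendental ℚ α := by
  have hclose : ∃ᶠ n in atTop, |α - ((∑ k ∈ Finset.range (n + 1), a k : ℚ) : ℝ)|
      ≤ C / ((∑ k ∈ Finset.range (n + 1), a k : ℚ).den : ℝ) ^ 3 :=
    (frequently_atTop.2 happrox).mono fun _ h => (abs_of_pos h.1).trans_le h.2
  have hirr : Irrational α :=
    (Real.infinite_rat_abs_sub_lt_one_div_den_sq_iff_irrational α).1 <|
      Set.infinite_of_frequently_mem_of_tendsto_den hden <|
        hclose.abs_sub_lt_of_eventually_div_pow_three_lt hden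
          (Real.eventually_div_pow_three_lt_one_div_sq C)
  refine ⟨hirr, fun halg => ?_⟩
  exact Set.infinite_of_frequently_mem_of_tendsto_den hden
    (hclose.abs_sub_lt_of_eventually_div_pow_three_lt hden
      (Real.eventually_div_pow_three_lt_rpow C (by norm_num : (1 / 2 : ℝ) < 1)))
    (roth α hirr halg (1 / 2) (by norm_num))

theorem stmt_17
    (roth : ∀ α : ℝ, Irrational α → IsAlgebraic ℚ α → ∀ ε : ℝ, 0 < ε →
      {q : ℚ | |α - (q : ℝ)| < ((q.den : ℝ)) ^ (-(2 + ε))}.Finite)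
    (x : ℕ → ℕ) (hx : StrictMono x) (hxpos : ∀ k, 0 < x k)
    (a : ℕ → ℚ) (ha : ∀ k, 0 < a k)
    (α : ℝ) (C : ℝ)
    (hlim : Tendsto (fun n : ℕ => ((∑ k ∈ Finset.range (n + 1), a k : ℚ) : ℝ))
      atTop (nhds α))
    (happrox : ∀ N : ℕ, ∃ n ≥ N,
      0 < α - ((∑ k ∈ Finset.range (n + 1), a k : ℚ) : ℝ) ∧
      α - ((∑ k ∈ Finset.range (n + 1), a k : ℚ) : ℝ)
        ≤ C / ((∑ k ∈ Finset.range (n + 1), a k : ℚ).den : ℝ) ^ 3)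
    (hden : Tendsto (fun n : ℕ => (∑ k ∈ Finset.range (n + 1), a k : ℚ).den)
      atTop atTop) :
    Irrational α ∧ Transcendental ℚ α :=
  stmt_17_general roth a α C happrox hden
end
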